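/- arXiv:math/0409538 — 2 statements merged into one kernel-verified Lean document; each statement's English description precedes it below -/
import Mathlib

section
/- Let μ be a partition and N ≥ 1, and use the total order <₂ on the super alphabet A. Then Σ_σ (−1)^{m(σ)} q^{inv(σ)} t^{p(σ)+maj(σ)} x^{|σ|}, summed over ALL super fillings σ : dg(μ) → A with |σ(u)| ≤ N for all u, equals the same sum restricted to those super fillings σ satisfying |σ(u)| ≥ i for every cell u = (i,j) ∈ dg(μ). -/
open Finset MvPolynomial

namespace HHL

/-! ### Diagrams, fillings and the statistics `inv` and `maj` -/

/-- The cells of the Young diagram of the partition `μ` (given as the list of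
its row lengths `μ_1, μ_2, …`); the cell `(i,j)` lies in row `i` (from the
bottom, French style) and column `j`, with `1 ≤ i ≤ ℓ(μ)`, `1 ≤ j ≤ μ_i`. -/
def cells (μ : List ℕ) : Finset (ℕ × ℕ) :=
  (Finset.Icc 1 μ.length ×ˢ Finset.Icc 1 (μ.foldr max 0)).filter
    (fun u => u.2 ≤ μ.getD (u.1 - 1) 0)

/-- `μ` is a partition: a weakly decreasing list of positive integers. -/
def IsPartitionList (μ : List ℕ) : Prop := μ.Pairwise (· ≥ ·) ∧ ∀ x ∈ μ, 0 < x

/-- The arm of a cell: the number of cells strictly to its right in its row. -/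
def arm (μ : List ℕ) (u : ℕ × ℕ) : ℕ :=
  ((cells μ).filter (fun v => v.1 = u.1 ∧ u.2 < v.2)).card

/-- The leg of a cell: the number of cells strictly above it in its column. -/
def leg (μ : List ℕ) (u : ℕ × ℕ) : ℕ :=
  ((cells μ).filter (fun v => v.2 = u.2 ∧ u.1 < v.1)).card

/-- `u` precedes `v` in the reading order (row by row from the top row down,
left to right within each row). -/
def ReadBefore (u v : ℕ × ℕ) : Prop := v.1 < u.1 ∨ (u.1 = v.1 ∧ u.2 < v.2)

instance (u v : ℕ × ℕ) : Decidable (ReadBefore u v) := by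
  unfold ReadBefore; infer_instance

/-- `u` and `v` attack each other and `u` precedes `v` in reading order: either
they are in the same row with `u` to the left, or `u` is one row above `v` and
strictly to its right. -/
def AttackOrd (u v : ℕ × ℕ) : Prop :=
  (u.1 = v.1 ∧ u.2 < v.2) ∨ (u.1 = v.1 + 1 ∧ v.2 < u.2)

instance (u v : ℕ × ℕ) : Decidable (AttackOrd u v) := by
  unfold AttackOrd; infer_instance

/-- `u` and `v` attack each other. -/
def Attack (u v : ℕ × ℕ) : Prop := AttackOrd u v ∨ AttackOrd v u

instance (u v : ℕ × ℕ) : Decidable (Attack u v) := by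
  unfold Attack; infer_instance

section Stats

variable {V : Type} (μ : List ℕ) (Ind : V → V → Prop) [DecidableRel Ind] (σ : ℕ × ℕ → V)

/-- The set `Inv(σ)` of inversions of a filling `σ`, recorded as ordered pairs
`(u,v)` with `u` attacking `v`, `u` preceding `v` in reading order, and
`I(σ(u),σ(v)) = 1`; here `Ind x y` means `I(x,y) = 1` (for ordinary fillings
`Ind x y ↔ x > y`). -/
def invPairs : Finset ((ℕ × ℕ) × (ℕ × ℕ)) :=
  ((cells μ) ×ˢ (cells μ)).filter fun p => AttackOrd p.1 p.2 ∧ Ind (σ p.1) (σ p.2)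

/-- The descent set `Des(σ)`: cells `u = (i+1,j)` with `v = (i,j) ∈ dg(μ)` and
`I(σ(u),σ(v)) = 1`. -/
def desCells : Finset (ℕ × ℕ) :=
  (cells μ).filter fun u => (u.1 - 1, u.2) ∈ cells μ ∧ Ind (σ u) (σ (u.1 - 1, u.2))

/-- `maj(σ) = Σ_{u ∈ Des(σ)} (leg(u) + 1)`. -/
def majStat : ℕ := ∑ u ∈ desCells μ Ind σ, (leg μ u + 1)

/-- `inv(σ) = |Inv(σ)| − Σ_{u ∈ Des(σ)} arm(u)`. -/
def invStat : ℕ := (invPairs μ Ind σ).card - ∑ u ∈ desCells μ Ind σ, arm μ u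

end Stats

/-- For ordinary (positive-integer valued) fillings, `I(x,y) = 1` iff `x > y`. -/
def natInd : ℕ → ℕ → Prop := fun x y => y < x

instance : DecidableRel natInd := fun _ _ => by unfold natInd; infer_instance

/-- Extend a function defined on the cells of `μ` to a total function. -/
def extendF {V : Type} (μ : List ℕ) (d : V) (f : {u // u ∈ cells μ} → V) : ℕ × ℕ → V :=
  fun u => if h : u ∈ cells μ then f ⟨u, h⟩ else d

/-- A filling of `dg(μ)` with entries in `{1, …, N}`, encoded by a function to
`Fin N` (value `k` means the entry `k + 1`), as a total function `ℕ × ℕ → ℕ`. -/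
def natFill (μ : List ℕ) {N : ℕ} (f : {u // u ∈ cells μ} → Fin N) : ℕ × ℕ → ℕ :=
  extendF μ 0 fun u => (f u).val + 1

/-- Haglund's combinatorial formula
`C_μ(x_1,…,x_N;q,t) = Σ_σ q^{inv(σ)} t^{maj(σ)} x^σ`, a polynomial in
`x_1,…,x_N` with coefficients in `ℤ[q,t]`, where `q = C (X 0)`, `t = C (X 1)`. -/
noncomputable def Cmu (μ : List ℕ) (N : ℕ) :
    MvPolynomial (Fin N) (MvPolynomial (Fin 2) ℤ) :=
  ∑ f : {u // u ∈ cells μ} → Fin N,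
    C ((X 0 : MvPolynomial (Fin 2) ℤ) ^ invStat μ natInd (natFill μ f) *
       (X 1 : MvPolynomial (Fin 2) ℤ) ^ majStat μ natInd (natFill μ f)) *
    ∏ u, X (f u)

/-! ### Skew diagrams and LLT polynomials -/

/-- A pair of partitions `(λ, μ)` with `μ ⊆ λ`, representing the skew diagram
`λ∖μ`. -/
def IsSkewPair (p : List ℕ × List ℕ) : Prop :=
  IsPartitionList p.1 ∧ IsPartitionList p.2 ∧ ∀ i, p.2.getD i 0 ≤ p.1.getD i 0

/-- The cells of the skew diagram `λ∖μ`. -/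
def skewCells (p : List ℕ × List ℕ) : Finset (ℕ × ℕ) := cells p.1 \ cells p.2

/-- The content `c(u) = i − j` of the cell `u = (i,j)`. -/
def content (u : ℕ × ℕ) : ℤ := (u.1 : ℤ) - (u.2 : ℤ)

/-- The disjoint union of the cells of a tuple of skew diagrams. -/
abbrev TDom {k : ℕ} (ν : Fin k → List ℕ × List ℕ) : Type :=
  Σ i : Fin k, {u // u ∈ skewCells (ν i)}

/-- `f` (with `f ⟨i,u⟩` the entry of the `i`-th tableau at the cell `u`) is a
tuple of semistandard Young tableaux: entries weakly increasing along each row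
and strictly increasing up each column. -/
def IsSSYTtuple {k : ℕ} (ν : Fin k → List ℕ × List ℕ) (f : TDom ν → ℕ) : Prop :=
  ∀ i : Fin k, ∀ u v : {u // u ∈ skewCells (ν i)},
    (u.1.1 = v.1.1 ∧ u.1.2 ≤ v.1.2 → f ⟨i, u⟩ ≤ f ⟨i, v⟩) ∧
    (u.1.2 = v.1.2 ∧ u.1.1 < v.1.1 → f ⟨i, u⟩ < f ⟨i, v⟩)

instance {k : ℕ} (ν : Fin k → List ℕ × List ℕ) (f : TDom ν → ℕ) :
    Decidable (IsSSYTtuple ν f) := by unfold IsSSYTtuple; infer_instance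

/-- The number of inversions of a tuple of tableaux: pairs of entries
`T^(i)(u) > T^(j)(v)` with either `i < j` and `c(u) = c(v)`, or `i > j` and
`c(u) = c(v) + 1`. -/
def lltInv {k : ℕ} (ν : Fin k → List ℕ × List ℕ) (f : TDom ν → ℕ) : ℕ :=
  (Finset.univ.filter fun p : TDom ν × TDom ν =>
    ((p.1.1 < p.2.1 ∧ content p.1.2.1 = content p.2.2.1) ∨
     (p.2.1 < p.1.1 ∧ content p.1.2.1 = content p.2.2.1 + 1)) ∧
    f p.2 < f p.1).card

/-- The LLT polynomial `G_ν(x_1,…,x_N;q) = Σ_T q^{inv(T)} x^T` in `N`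
variables, with coefficients in `ℤ[q]` (`q = C Polynomial.X`); tableau entries
in `{1,…,N}` are encoded by `Fin N` (value `k` means entry `k + 1`). -/
noncomputable def llt {k : ℕ} (ν : Fin k → List ℕ × List ℕ) (N : ℕ) :
    MvPolynomial (Fin N) (Polynomial ℤ) :=
  ∑ f ∈ Finset.univ.filter (fun f : TDom ν → Fin N =>
      IsSSYTtuple ν (fun a => (f a).val + 1)),
    C (Polynomial.X ^ lltInv ν (fun a => (f a).val + 1)) * ∏ a, X (f a)

/-! ### The super alphabet -/

/-- The super alphabet `A = {1, 1̄, 2, 2̄, …}`: the letter `(a, b)` has absolute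
value `a + 1` and is negative (barred) iff `b = true`. -/
abbrev SLetter : Type := ℕ × Bool

/-- The absolute value of a super letter. -/
def sAbs (x : SLetter) : ℕ := x.1 + 1

/-- The ordering `<₁`: `1 < 1̄ < 2 < 2̄ < ⋯`. -/
def lt1 (x y : SLetter) : Prop :=
  x.1 < y.1 ∨ (x.1 = y.1 ∧ x.2 = false ∧ y.2 = true)

instance : DecidableRel lt1 := fun _ _ => by unfold lt1; infer_instance

/-- The ordering `<₂`: `1 < 2 < 3 < ⋯ < 3̄ < 2̄ < 1̄`. -/
def lt2 (x y : SLetter) : Prop :=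
  (x.2 = false ∧ y.2 = false ∧ x.1 < y.1) ∨ (x.2 = false ∧ y.2 = true) ∨
    (x.2 = true ∧ y.2 = true ∧ y.1 < x.1)

instance : DecidableRel lt2 := fun _ _ => by unfold lt2; infer_instance

/-- Given a total order `lt` on the super alphabet, `IndOf lt x y` holds iff
`I(x,y) = 1`, i.e. `x > y`, or `x = y` is a negative letter. -/
def IndOf (lt : SLetter → SLetter → Prop) (x y : SLetter) : Prop :=
  lt y x ∨ (x = y ∧ x.2 = true)

instance (lt : SLetter → SLetter → Prop) [DecidableRel lt] : DecidableRel (IndOf lt) :=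
  fun _ _ => by unfold IndOf; infer_instance

/-- A super filling of `dg(μ)` with letters of absolute value at most `N`, as a
total function (the value `(a, b)` with `a : Fin N` means the letter of
absolute value `a + 1`, barred iff `b`). -/
def superFill (μ : List ℕ) {N : ℕ} (f : {u // u ∈ cells μ} → Fin N × Bool) :
    ℕ × ℕ → SLetter :=
  extendF μ (0, false) fun u => ((f u).1.val, (f u).2)

/-- A super filling with entries in `{1, 1̄}` (`f u = true` means entry `1̄`). -/
def boolFill (μ : List ℕ) (f : {u // u ∈ cells μ} → Bool) : ℕ × ℕ → SLetter :=
  extendF μ (0, false) fun u => ((0 : ℕ), f u)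

/-- `m(σ)`: the number of negative entries of a super filling. -/
def negCount (μ : List ℕ) (σ : ℕ × ℕ → SLetter) : ℕ :=
  ((cells μ).filter fun u => (σ u).2 = true).card

/-- `p(σ)`: the number of positive entries of a super filling. -/
def posCount (μ : List ℕ) (σ : ℕ × ℕ → SLetter) : ℕ :=
  ((cells μ).filter fun u => (σ u).2 = false).card

/-- A super filling is non-attacking if entries in attacking cells have
distinct absolute values. -/
def NonAttacking (μ : List ℕ) (σ : ℕ × ℕ → SLetter) : Prop :=
  ∀ u ∈ cells μ, ∀ v ∈ cells μ, Attack u v → sAbs (σ u) ≠ sAbs (σ v)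

instance (μ : List ℕ) (σ : ℕ × ℕ → SLetter) : Decidable (NonAttacking μ σ) := by
  unfold NonAttacking; infer_instance

/-! ### Conjugate partitions, ribbons, connectivity -/

/-- `conj μ j = μ'_j`, the number of rows of `μ` of length at least `j`. -/
def conj (μ : List ℕ) (j : ℕ) : ℕ :=
  ((Finset.range μ.length).filter fun i => j ≤ μ.getD i 0).card

/-- The transpose `μ'` of a partition, as a list. -/
def conjList (μ : List ℕ) : List ℕ :=
  (List.range (μ.foldr max 0)).map fun j => conj μ (j + 1)

/-- Transpose of a skew shape: `λ∖μ ↦ λ'∖μ'`. -/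
def transposePair (p : List ℕ × List ℕ) : List ℕ × List ℕ :=
  (conjList p.1, conjList p.2)

/-- Two cells are adjacent (share an edge). -/
def AdjCell (u v : ℕ × ℕ) : Prop :=
  (u.1 = v.1 ∧ (u.2 = v.2 + 1 ∨ v.2 = u.2 + 1)) ∨
  (u.2 = v.2 ∧ (u.1 = v.1 + 1 ∨ v.1 = u.1 + 1))

/-- A set of cells is connected (any two cells are joined by a path of
edge-adjacent cells inside the set). -/
def ConnSet (s : Finset (ℕ × ℕ)) : Prop :=
  ∀ u ∈ s, ∀ v ∈ s, Relation.ReflTransGen (fun a b => a ∈ s ∧ b ∈ s ∧ AdjCell a b) u v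

/-- A set of cells contains no 2×2 block. -/
def No2x2 (s : Finset (ℕ × ℕ)) : Prop :=
  ¬ ∃ i j, (i, j) ∈ s ∧ (i + 1, j) ∈ s ∧ (i, j + 1) ∈ s ∧ (i + 1, j + 1) ∈ s

/-! ### Reading words and cocharge -/

/-- Boolean comparison realizing the reading order. -/
def readLe (u v : ℕ × ℕ) : Bool :=
  decide (v.1 < u.1) || (decide (u.1 = v.1) && decide (u.2 ≤ v.2))

/-- The reading word of a filling `σ` of `dg(μ)`: its entries listed in reading
order. -/
noncomputable def readingWord (μ : List ℕ) (σ : ℕ × ℕ → ℕ) : List ℕ :=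
  ((cells μ).toList.mergeSort readLe).map σ

/-- Boolean comparison for the cocharge-word ordering of the cells: entries of
`σ` decreasing and, within constant segments of `σ`, cells in decreasing
reading order. -/
def cwordLe (σ : ℕ × ℕ → ℕ) (u v : ℕ × ℕ) : Bool :=
  decide (σ v < σ u) ||
    (decide (σ u = σ v) &&
      (decide (u.1 < v.1) || (decide (u.1 = v.1) && decide (v.2 ≤ u.2))))

/-- The cocharge word of a filling: the row indices of the cells, listed so that
the entries are decreasing, with ties broken by decreasing reading order. -/
noncomputable def cword (μ : List ℕ) (σ : ℕ × ℕ → ℕ) : List ℕ :=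
  ((cells μ).toList.mergeSort (cwordLe σ)).map Prod.fst

/-- Cocharge of a word that is a permutation of `{1,…,n}`:
`Σ_{i ∈ D(w⁻¹)} (n − i)`, where `i ∈ D(w⁻¹)` iff `i + 1` occurs before `i`. -/
def cochargePerm (w : List ℕ) : ℕ :=
  ∑ i ∈ Finset.Icc 1 (w.length - 1),
    if w.idxOf (i + 1) < w.idxOf i then w.length - i else 0

/-- The (0-based) positions of the letter `a` in `w`. -/
def letterPositions (w : List ℕ) (a : ℕ) : Finset ℕ :=
  (Finset.range w.length).filter fun k => w.getD k 0 = a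

/-- The position `k_i` for the letter `a`: the rightmost occurrence of `a`
strictly to the left of `bound` if there is one, otherwise the rightmost
occurrence of `a`. -/
def choosePos (w : List ℕ) (a : ℕ) (bound : Option ℕ) : Option ℕ :=
  match bound with
  | none => (letterPositions w a).max
  | some b =>
      let s := (letterPositions w a).filter (· < b)
      if s.Nonempty then s.max else (letterPositions w a).max

/-- `posListAux w i = [k_i, k_{i-1}, …, k_1]` (as options). -/
def posListAux (w : List ℕ) : ℕ → List (Option ℕ)
  | 0 => []
  | i + 1 =>
      let rest := posListAux w i
      choosePos w (i + 1) (rest.headD none) :: rest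

/-- The set `S = {k_1, …, k_l}` of positions extracted in the cocharge
recursion, where `l` is the largest letter of `w`. -/
def extractSet (w : List ℕ) : Finset ℕ :=
  ((posListAux w (w.foldr max 0)).filterMap id).toFinset

/-- The subword of `w` at the positions in `S` (in increasing position order). -/
def subwordOn (w : List ℕ) (S : Finset ℕ) : List ℕ :=
  ((List.range w.length).filter fun k => decide (k ∈ S)).map fun k => w.getD k 0

/-- The subword of `w` at the positions *not* in `S`. -/
def subwordOff (w : List ℕ) (S : Finset ℕ) : List ℕ :=
  ((List.range w.length).filter fun k => decide (k ∉ S)).map fun k => w.getD k 0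

/-- Fuelled cocharge recursion: `cocharge w = cocharge y + cocharge z`, where
`y` is the extracted subword (a permutation of `{1,…,l}`) and `z` is the
complementary subword. -/
def cochargeAux : ℕ → List ℕ → ℕ
  | 0, _ => 0
  | fuel + 1, w =>
      let S := extractSet w
      let z := subwordOff w S
      if z.length < w.length then cochargePerm (subwordOn w S) + cochargeAux fuel z
      else cochargePerm (subwordOn w S)

/-- The cocharge of a word of partition content. -/
def cocharge (w : List ℕ) : ℕ := cochargeAux w.length w

/-! ### Yamanouchi words and crystal operators -/

/-- A word is Yamanouchi if every final segment contains at least as many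
letters `i` as letters `i + 1`, for every `i ≥ 1`. -/
def IsYamanouchi (w : List ℕ) : Prop :=
  ∀ k i, ((w.drop k).count (i + 2)) ≤ ((w.drop k).count (i + 1))

noncomputable instance : DecidablePred IsYamanouchi := fun _ => Classical.propDecidable _

/-- The letters `i` (close, `false`) and `i + 1` (open, `true`) of `w`, as a
list of (position, is-open) tokens in position order. -/
def tokens (i : ℕ) (w : List ℕ) : List (ℕ × Bool) :=
  (List.range w.length).filterMap fun k =>
    if w.getD k 0 = i + 1 then some (k, true)
    else if w.getD k 0 = i then some (k, false) else none

/-- Stack pass performing the repeated deletion of adjacent matched pairs (an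
`i + 1` immediately followed by an `i` in the current subword). The first
argument is the (reversed) list of surviving tokens so far. -/
def reduceTokens : List (ℕ × Bool) → List (ℕ × Bool) → List (ℕ × Bool)
  | acc, [] => acc.reverse
  | a :: acc', t :: rest =>
      if a.2 ∧ ¬ t.2 then reduceTokens acc' rest
      else reduceTokens (t :: a :: acc') rest
  | [], t :: rest => reduceTokens [t] rest

/-- The surviving letters of `{i, i + 1}` in `w` after matched-pair deletion. -/
def survivors (i : ℕ) (w : List ℕ) : List (ℕ × Bool) := reduceTokens [] (tokens i w)

/-- The crystal raising operator `E_i` on words: change the first surviving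
(unmatched) letter `i + 1` to `i`; `none` encodes `E_i w = 0`. -/
def crystalE (i : ℕ) (w : List ℕ) : Option (List ℕ) :=
  match (survivors i w).find? (fun t => t.2) with
  | none => none
  | some t => some (w.set t.1 i)

/-! ### Straight-shape tableaux and Schur polynomials -/

/-- Semistandard tableau condition for a filling of the cells of `lam`. -/
def IsSSYTcells (lam : List ℕ) (T : {u // u ∈ cells lam} → ℕ) : Prop :=
  ∀ u v : {u // u ∈ cells lam},
    (u.1.1 = v.1.1 ∧ u.1.2 ≤ v.1.2 → T u ≤ T v) ∧
    (u.1.2 = v.1.2 ∧ u.1.1 < v.1.1 → T u < T v)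

instance (lam : List ℕ) (T : {u // u ∈ cells lam} → ℕ) :
    Decidable (IsSSYTcells lam T) := by unfold IsSSYTcells; infer_instance

/-- The Schur polynomial `s_λ(x_1,…,x_N) = Σ_{T ∈ SSYT(λ), entries ≤ N} x^T`,
with coefficients in a commutative ring `R`. -/
noncomputable def schurPoly (R : Type) [CommRing R] (lam : List ℕ) (N : ℕ) :
    MvPolynomial (Fin N) R :=
  ∑ T ∈ Finset.univ.filter (fun T : {u // u ∈ cells lam} → Fin N =>
      IsSSYTcells lam (fun u => (T u).val + 1)),
    ∏ u, X (T u)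

/-- The decreasing list of parts of `p : Nat.Partition n`. -/
def partnList {n : ℕ} (p : n.Partition) : List ℕ :=
  (Multiset.sort p.parts (· ≤ ·)).reverse

/-!
Fillings violating the row bound cancel in pairs. Among the cells `u = (i,j)` with `|σ(u)| < i`,
the pivot has the smallest `|σ(u)|`, then the highest row, then the leftmost column; toggling the
bar of its entry keeps all absolute values, hence the pivot, so it is an involution. Say the pivot
`(r,j)` holds `a` and the toggle makes it `ā`. Every cell in rows `≥ r - 1` has absolute value
`≥ a`, and every cell read before the pivot has absolute value `> a`, so for `<₂` the pivot becomes
a descent and `(r+1,j)` stops being one: `p` drops by one and `maj` grows by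
`(leg(r,j) + 1) - (leg(r+1,j) + 1) = 1`. The pivot trades its inversions with the `j - 1` cells to
its left and the `arm(r+1,j)` cells attacking it from above for those with the `arm(r,j)` cells to
its right and the `j - 1` cells attacking it from below, a change that `Σ_{Des} arm` absorbs, so
`inv` is unchanged while `m` changes by one.
-/

section Geometry

lemma getD_le_foldr_max : ∀ (l : List ℕ) (k : ℕ), l.getD k 0 ≤ l.foldr max 0
  | [], _ => by simp
  | _ :: _, 0 => by simp
  | _ :: l, k + 1 => by simpa using Or.inr (getD_le_foldr_max l k)

lemma mem_cells_iff {μ : List ℕ} {i j : ℕ} :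
    (i, j) ∈ cells μ ↔ 1 ≤ i ∧ i ≤ μ.length ∧ 1 ≤ j ∧ j ≤ μ.getD (i - 1) 0 := by
  simp only [cells, mem_filter, mem_product, mem_Icc]
  exact ⟨fun ⟨⟨⟨h1, h2⟩, h3, _⟩, h5⟩ => ⟨h1, h2, h3, h5⟩,
    fun ⟨h1, h2, h3, h5⟩ => ⟨⟨⟨h1, h2⟩, h3, h5.trans (getD_le_foldr_max μ _)⟩, h5⟩⟩

lemma getD_le_getD_of_le {μ : List ℕ} (hμ : μ.Pairwise (· ≥ ·)) {k k' : ℕ} (h : k ≤ k') :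
    μ.getD k' 0 ≤ μ.getD k 0 := by
  rcases lt_or_ge k' μ.length with h' | h'
  · rcases h.eq_or_lt with rfl | hlt
    · exact le_rfl
    · have := hμ.rel_get_of_lt (a := ⟨k, hlt.trans h'⟩) (b := ⟨k', h'⟩) hlt
      simpa [List.getD_eq_getElem?_getD, hlt.trans h', h'] using this
  · rw [List.getD_eq_default _ _ h']
    exact Nat.zero_le _

variable {μ : List ℕ} {r j : ℕ}

lemma mem_cells_of_row_le (hμ : IsPartitionList μ) {i : ℕ} (h : (r, j) ∈ cells μ)
    (hi : 1 ≤ i) (hir : i ≤ r) : (i, j) ∈ cells μ := by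
  rw [mem_cells_iff] at h ⊢
  exact ⟨hi, hir.trans h.2.1, h.2.2.1, h.2.2.2.trans (getD_le_getD_of_le hμ.1 (by omega))⟩

lemma card_cells_row_lt (h : (r, j) ∈ cells μ) :
    ((cells μ).filter fun v => v.1 = r ∧ v.2 < j).card = j - 1 := by
  have hrow : (cells μ).filter (fun v => v.1 = r ∧ v.2 < j) = (Ico 1 j).image (r, ·) := by
    ext ⟨i, c⟩
    have := mem_cells_iff.mp h
    simp only [mem_filter, mem_image, mem_Ico, Prod.mk.injEq, mem_cells_iff]
    constructor
    · rintro ⟨⟨-, -, hc, -⟩, rfl, hcj⟩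
      exact ⟨c, ⟨hc, hcj⟩, rfl, rfl⟩
    · rintro ⟨c, ⟨hc, hcj⟩, rfl, rfl⟩
      exact ⟨⟨this.1, this.2.1, hc, by omega⟩, rfl, hcj⟩
  rw [hrow, card_image_of_injective _ (Prod.mk_right_injective r), Nat.card_Ico]

lemma arm_eq_zero_of_notMem (hj : 1 ≤ j) (h : (r, j) ∉ cells μ) : arm μ (r, j) = 0 := by
  rw [arm, card_eq_zero, filter_eq_empty_iff]
  rintro ⟨i, c⟩ hv ⟨rfl, hjc⟩
  simp only [mem_cells_iff] at hv h
  omega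

lemma leg_eq_ite (hμ : IsPartitionList μ) (h : (r, j) ∈ cells μ) :
    leg μ (r, j) = if (r + 1, j) ∈ cells μ then leg μ (r + 1, j) + 1 else 0 := by
  split_ifs with hw
  · rw [leg, leg, ← card_insert_of_notMem (s := filter _ _) (a := (r + 1, j)) (by simp)]
    congr 1
    ext ⟨i, c⟩
    simp only [mem_filter, mem_insert, Prod.mk.injEq]
    constructor
    · rintro ⟨hv, rfl, hi⟩
      rcases (Nat.succ_le_of_lt hi).eq_or_lt with rfl | hi'
      · exact Or.inl ⟨rfl, rfl⟩
      · exact Or.inr ⟨hv, rfl, hi'⟩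
    · rintro (⟨rfl, rfl⟩ | ⟨hv, rfl, hi⟩)
      · exact ⟨hw, rfl, by omega⟩
      · exact ⟨hv, rfl, by omega⟩
  · rw [leg, card_eq_zero, filter_eq_empty_iff]
    rintro ⟨i, c⟩ hv ⟨rfl, hi⟩
    exact hw (mem_cells_of_row_le hμ hv (by omega) hi)

lemma card_attackOrd_left (h : (r, j) ∈ cells μ) :
    ((cells μ).filter (AttackOrd · (r, j))).card = (j - 1) + arm μ (r + 1, j) := by
  have hsplit : (cells μ).filter (AttackOrd · (r, j)) = (cells μ).filter
      (fun v => (v.1 = r ∧ v.2 < j) ∨ (v.1 = r + 1 ∧ j < v.2)) := rfl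
  rw [hsplit, filter_or, card_union_of_disjoint, card_cells_row_lt h, arm]
  exact disjoint_filter.mpr fun _ _ h₁ h₂ => by omega

lemma card_attackOrd_right (hμ : IsPartitionList μ) (h : (r, j) ∈ cells μ) (hr : 2 ≤ r) :
    ((cells μ).filter (AttackOrd (r, j) ·)).card = arm μ (r, j) + (j - 1) := by
  have hsplit : (cells μ).filter (AttackOrd (r, j) ·) = (cells μ).filter
      (fun v => (v.1 = r ∧ j < v.2) ∨ (v.1 = r - 1 ∧ v.2 < j)) :=
    filter_congr fun v _ => by simp only [AttackOrd]; omega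
  rw [hsplit, filter_or, card_union_of_disjoint,
    card_cells_row_lt (mem_cells_of_row_le hμ h (by omega) (Nat.sub_le r 1)), arm]
  exact disjoint_filter.mpr fun _ _ h₁ h₂ => by omega

end Geometry

lemma indOf_lt2_iff_of_sAbs_le {x y : SLetter} (h : sAbs x ≤ sAbs y) :
    IndOf lt2 x y ↔ x.2 = true := by
  obtain ⟨x1, _ | _⟩ := x <;> obtain ⟨y1, _ | _⟩ := y <;>
    simp only [sAbs] at h <;> simp [IndOf, lt2, Prod.ext_iff] <;> omega

lemma indOf_lt2_iff_of_sAbs_lt {x y : SLetter} (h : sAbs x < sAbs y) :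
    IndOf lt2 y x ↔ x.2 = false := by
  obtain ⟨x1, _ | _⟩ := x <;> obtain ⟨y1, _ | _⟩ := y <;>
    simp only [sAbs] at h <;> simp [IndOf, lt2, Prod.ext_iff] <;> omega

section InvPairs

variable {V : Type} (μ : List ℕ) (Ind : V → V → Prop) [DecidableRel Ind] (σ : ℕ × ℕ → V)

lemma card_invPairs_split {u : ℕ × ℕ} (hu : u ∈ cells μ) :
    (invPairs μ Ind σ).card = ((invPairs μ Ind σ).filter fun p => p.1 ≠ u ∧ p.2 ≠ u).card
      + ((cells μ).filter fun v => AttackOrd v u ∧ Ind (σ v) (σ u)).card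
      + ((cells μ).filter fun v => AttackOrd u v ∧ Ind (σ u) (σ v)).card := by
  have hirrefl : ¬ AttackOrd u u := by simp [AttackOrd]
  have hrest : (invPairs μ Ind σ).filter (fun p => ¬ (p.1 ≠ u ∧ p.2 ≠ u)) =
      (invPairs μ Ind σ).filter (fun p => p.2 = u) ∪
        (invPairs μ Ind σ).filter (fun p => p.1 = u) := by
    rw [← filter_or]
    exact filter_congr fun p _ => by tauto
  have hdisj : Disjoint ((invPairs μ Ind σ).filter (fun p => p.2 = u))
      ((invPairs μ Ind σ).filter (fun p => p.1 = u)) := by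
    refine disjoint_filter.mpr fun p hp h₂ h₁ => hirrefl ?_
    have := (mem_filter.mp hp).2.1
    rwa [h₁, h₂] at this
  have hleft : ((invPairs μ Ind σ).filter (fun p => p.2 = u)).card =
      ((cells μ).filter fun v => AttackOrd v u ∧ Ind (σ v) (σ u)).card :=
    card_nbij' Prod.fst (·, u) (fun p hp => by aesop (add simp invPairs))
      (fun v hv => by aesop (add simp invPairs)) (fun p hp => by aesop) (fun v _ => rfl)
  have hright : ((invPairs μ Ind σ).filter (fun p => p.1 = u)).card =
      ((cells μ).filter fun v => AttackOrd u v ∧ Ind (σ u) (σ v)).card :=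
    card_nbij' Prod.snd (u, ·) (fun p hp => by aesop (add simp invPairs))
      (fun v hv => by aesop (add simp invPairs)) (fun p hp => by aesop) (fun v _ => rfl)
  rw [← card_filter_add_card_filter_not (fun p => p.1 ≠ u ∧ p.2 ≠ u), hrest,
    card_union_of_disjoint hdisj, hleft, hright, add_assoc]

lemma invPairs_filter_update [DecidableEq V] (u : ℕ × ℕ) (x : V) :
    (invPairs μ Ind (Function.update σ u x)).filter (fun p => p.1 ≠ u ∧ p.2 ≠ u) =
      (invPairs μ Ind σ).filter (fun p => p.1 ≠ u ∧ p.2 ≠ u) := by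
  simp only [invPairs, filter_filter]
  exact filter_congr fun p _ => by
    constructor <;> rintro ⟨⟨h₁, h₂⟩, h₃, h₄⟩ <;>
      simp_all [Function.update_of_ne]

end InvPairs

/-- The conditions on a cell under which toggling the bar of its entry changes `m` by one and
preserves `inv` and `p + maj`. -/
structure IsPivot (μ : List ℕ) (σ : ℕ × ℕ → SLetter) (u : ℕ × ℕ) : Prop where
  mem : u ∈ cells μ
  lt_row : sAbs (σ u) < u.1
  le_of_row_ge : ∀ v ∈ cells μ, u.1 - 1 ≤ v.1 → sAbs (σ u) ≤ sAbs (σ v)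
  lt_of_readBefore : ∀ v ∈ cells μ, ReadBefore v u → sAbs (σ u) < sAbs (σ v)

lemma IsPivot.of_sAbs_eq {μ : List ℕ} {σ τ : ℕ × ℕ → SLetter} {u : ℕ × ℕ}
    (hp : IsPivot μ σ u) (h : ∀ v, sAbs (τ v) = sAbs (σ v)) : IsPivot μ τ u where
  mem := hp.mem
  lt_row := h u ▸ hp.lt_row
  le_of_row_ge v hv hrow := h u ▸ h v ▸ hp.le_of_row_ge v hv hrow
  lt_of_readBefore v hv hread := h u ▸ h v ▸ hp.lt_of_readBefore v hv hread

section Toggle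

variable {μ : List ℕ} {σ : ℕ × ℕ → SLetter} {r j k : ℕ}

local notation "σ'" => Function.update σ (r, j) (k, true)

lemma negCount_update_bar (hu : (r, j) ∈ cells μ) (hσ : σ (r, j) = (k, false)) :
    negCount μ σ' = negCount μ σ + 1 := by
  rw [negCount, negCount, ← card_insert_of_notMem (a := (r, j)) (by simp [hσ])]
  congr 1
  ext v
  by_cases hv : v = (r, j)
  · subst hv; simp [hu]
  · simp [hv]

lemma posCount_update_bar (hu : (r, j) ∈ cells μ) (hσ : σ (r, j) = (k, false)) :
    posCount μ σ = posCount μ σ' + 1 := by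
  rw [posCount, posCount, ← card_insert_of_notMem (a := (r, j)) (by simp)]
  congr 1
  ext v
  by_cases hv : v = (r, j)
  · subst hv; simp [hu, hσ]
  · simp [hv]

lemma IsPivot.two_le_row (hp : IsPivot μ σ (r, j)) : 2 ≤ r := by
  have := hp.lt_row
  simp only [sAbs] at this
  omega

lemma notMem_desCells_of_isPivot (hp : IsPivot μ σ (r, j)) (hσ : σ (r, j) = (k, false)) :
    (r, j) ∉ desCells μ (IndOf lt2) σ := by
  simp only [desCells, mem_filter, not_and]
  intro _ hbelow hind
  have := (indOf_lt2_iff_of_sAbs_le (hp.le_of_row_ge _ hbelow le_rfl)).mp hind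
  simp [hσ] at this

lemma mem_desCells_above_iff (hp : IsPivot μ σ (r, j)) (hσ : σ (r, j) = (k, false)) :
    (r + 1, j) ∈ desCells μ (IndOf lt2) σ ↔ (r + 1, j) ∈ cells μ := by
  simp only [desCells, mem_filter, Nat.add_sub_cancel, and_iff_left_iff_imp]
  intro hw
  refine ⟨hp.mem, (indOf_lt2_iff_of_sAbs_lt ?_).mpr (by simp [hσ])⟩
  exact hp.lt_of_readBefore _ hw (Or.inl (Nat.lt_succ_self r))

lemma desCells_update_bar (hμ : IsPartitionList μ) (hp : IsPivot μ σ (r, j))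
    (hσ : σ (r, j) = (k, false)) :
    desCells μ (IndOf lt2) σ' = insert (r, j) ((desCells μ (IndOf lt2) σ).erase (r + 1, j)) := by
  have hr := hp.two_le_row
  have hbelow : (r - 1, j) ∈ cells μ := mem_cells_of_row_le hμ hp.mem (by omega) (by omega)
  have habs : sAbs (k, true) = sAbs (σ (r, j)) := by simp [hσ, sAbs]
  ext v
  simp only [desCells, mem_insert, mem_erase, mem_filter]
  by_cases hu : v = (r, j)
  · subst hu
    have hne : (r - 1, j) ≠ (r, j) := by simp; omega
    simp only [true_or, iff_true, Function.update_self, Function.update_of_ne hne]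
    exact ⟨hp.mem, hbelow,
      (indOf_lt2_iff_of_sAbs_le (habs.trans_le (hp.le_of_row_ge _ hbelow le_rfl))).mpr rfl⟩
  by_cases hw : v = (r + 1, j)
  · subst hw
    simp only [hu, false_or, ne_eq, not_true_eq_false, false_and, iff_false, not_and,
      Nat.add_sub_cancel, Function.update_self, Function.update_of_ne hu]
    intro hw _ hind
    have := (indOf_lt2_iff_of_sAbs_lt (habs.trans_lt
      (hp.lt_of_readBefore _ hw (Or.inl (Nat.lt_succ_self r))))).mp hind
    simp at this
  · simp only [hu, hw, false_or, ne_eq, not_false_eq_true, true_and, Function.update_of_ne hu]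
    refine and_congr_right fun hv => and_congr_right fun _ => ?_
    have hbne : (v.1 - 1, v.2) ≠ (r, j) := by
      obtain ⟨i, c⟩ := v
      have := (mem_cells_iff.mp hv).1
      simp only [ne_eq, Prod.mk.injEq] at hw ⊢
      omega
    rw [Function.update_of_ne hbne]

lemma sum_desCells_update_bar (hμ : IsPartitionList μ) (hp : IsPivot μ σ (r, j))
    (hσ : σ (r, j) = (k, false)) (φ : ℕ × ℕ → ℕ) :
    ∑ v ∈ desCells μ (IndOf lt2) σ', φ v + (if (r + 1, j) ∈ cells μ then φ (r + 1, j) else 0)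
      = ∑ v ∈ desCells μ (IndOf lt2) σ, φ v + φ (r, j) := by
  rw [desCells_update_bar hμ hp hσ, sum_insert (fun h => notMem_desCells_of_isPivot hp hσ
    (mem_of_mem_erase h))]
  split_ifs with hw
  · rw [← sum_erase_add _ φ ((mem_desCells_above_iff hp hσ).mpr hw)]
    ring
  · rw [erase_eq_of_notMem (mt (mem_desCells_above_iff hp hσ).mp hw), add_zero, add_comm]

lemma majStat_update_bar (hμ : IsPartitionList μ) (hp : IsPivot μ σ (r, j))
    (hσ : σ (r, j) = (k, false)) :
    majStat μ (IndOf lt2) σ' = majStat μ (IndOf lt2) σ + 1 := by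
  have hsum := sum_desCells_update_bar hμ hp hσ (fun v => leg μ v + 1)
  rw [leg_eq_ite hμ hp.mem] at hsum
  unfold majStat
  split_ifs at hsum <;> omega

lemma card_invPairs_update_bar (hμ : IsPartitionList μ) (hp : IsPivot μ σ (r, j))
    (hσ : σ (r, j) = (k, false)) :
    (invPairs μ (IndOf lt2) σ').card + arm μ (r + 1, j)
      = (invPairs μ (IndOf lt2) σ).card + arm μ (r, j) := by
  have habs : sAbs (k, true) = sAbs (σ (r, j)) := by simp [hσ, sAbs]
  have hlt : ∀ v ∈ cells μ, AttackOrd v (r, j) → sAbs (σ (r, j)) < sAbs (σ v) :=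
    fun v hv hatt =>
      hp.lt_of_readBefore v hv (by simp only [AttackOrd, ReadBefore] at hatt ⊢; omega)
  have hle : ∀ v ∈ cells μ, AttackOrd (r, j) v → sAbs (σ (r, j)) ≤ sAbs (σ v) :=
    fun v hv hatt => hp.le_of_row_ge v hv (by simp only [AttackOrd] at hatt; omega)
  have hne : ∀ v, AttackOrd v (r, j) ∨ AttackOrd (r, j) v → v ≠ (r, j) := by
    rintro v hatt rfl; simp [AttackOrd] at hatt
  have hbefore : (cells μ).filter (fun v => AttackOrd v (r, j) ∧ IndOf lt2 (σ v) (σ (r, j)))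
      = (cells μ).filter (AttackOrd · (r, j)) :=
    filter_congr fun v hv => and_iff_left_of_imp fun hatt =>
      (indOf_lt2_iff_of_sAbs_lt (hlt v hv hatt)).mpr (by simp [hσ])
  have hafter : (cells μ).filter (fun v => AttackOrd (r, j) v ∧ IndOf lt2 (σ (r, j)) (σ v)) = ∅ :=
    filter_eq_empty_iff.mpr fun v hv ⟨hatt, hind⟩ => by
      simpa [hσ] using (indOf_lt2_iff_of_sAbs_le (hle v hv hatt)).mp hind
  have hbefore' : (cells μ).filter (fun v => AttackOrd v (r, j) ∧ IndOf lt2 (σ' v) (σ' (r, j)))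
      = ∅ :=
    filter_eq_empty_iff.mpr fun v hv ⟨hatt, hind⟩ => by
      rw [Function.update_self, Function.update_of_ne (hne v (Or.inl hatt))] at hind
      simpa using (indOf_lt2_iff_of_sAbs_lt (habs.trans_lt (hlt v hv hatt))).mp hind
  have hafter' : (cells μ).filter (fun v => AttackOrd (r, j) v ∧ IndOf lt2 (σ' (r, j)) (σ' v))
      = (cells μ).filter (AttackOrd (r, j) ·) :=
    filter_congr fun v hv => and_iff_left_of_imp fun hatt => by
      rw [Function.update_self, Function.update_of_ne (hne v (Or.inr hatt))]
      exact (indOf_lt2_iff_of_sAbs_le (habs.trans_le (hle v hv hatt))).mpr rfl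
  rw [card_invPairs_split μ _ σ' hp.mem, card_invPairs_split μ _ σ hp.mem, invPairs_filter_update,
    hbefore, hafter, hbefore', hafter', card_attackOrd_left hp.mem,
    card_attackOrd_right hμ hp.mem hp.two_le_row, card_empty]
  ring

lemma invStat_update_bar (hμ : IsPartitionList μ) (hp : IsPivot μ σ (r, j))
    (hσ : σ (r, j) = (k, false)) :
    invStat μ (IndOf lt2) σ' = invStat μ (IndOf lt2) σ := by
  have hcard := card_invPairs_update_bar hμ hp hσ
  have hsum := sum_desCells_update_bar hμ hp hσ (arm μ)
  have harm : (if (r + 1, j) ∈ cells μ then arm μ (r + 1, j) else 0) = arm μ (r + 1, j) := by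
    split_ifs with hw
    · rfl
    · exact (arm_eq_zero_of_notMem (mem_cells_iff.mp hp.mem).2.2.1 hw).symm
  rw [harm] at hsum
  unfold invStat
  omega

end Toggle

section Pivot

def violations (μ : List ℕ) (g : ℕ × ℕ → ℕ) : Finset (ℕ × ℕ) :=
  (cells μ).filter fun v => g v < v.1

/-- Cells are ranked by absolute value, then from the top row down, then from left to right. -/
def pivotKey (g : ℕ × ℕ → ℕ) (v : ℕ × ℕ) : ℕ ×ₗ ℕᵒᵈ ×ₗ ℕ :=
  toLex (g v, toLex (OrderDual.toDual v.1, v.2))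

noncomputable def pivot (μ : List ℕ) (g : ℕ × ℕ → ℕ) : ℕ × ℕ :=
  if h : (violations μ g).Nonempty then (exists_min_image _ (pivotKey g) h).choose else (0, 0)

variable {μ : List ℕ} {g : ℕ × ℕ → ℕ}

lemma violations_nonempty_iff : (violations μ g).Nonempty ↔ ¬ ∀ u ∈ cells μ, u.1 ≤ g u := by
  simp [violations, Finset.Nonempty]

lemma pivot_spec (h : (violations μ g).Nonempty) :
    pivot μ g ∈ violations μ g ∧ ∀ v ∈ violations μ g, pivotKey g (pivot μ g) ≤ pivotKey g v := by
  rw [pivot, dif_pos h]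
  exact (exists_min_image _ (pivotKey g) h).choose_spec

lemma pivotKey_le_iff {u v : ℕ × ℕ} :
    pivotKey g u ≤ pivotKey g v ↔
      g u < g v ∨ g u = g v ∧ (v.1 < u.1 ∨ u.1 = v.1 ∧ u.2 ≤ v.2) := by
  simp [pivotKey, Prod.Lex.toLex_le_toLex]

lemma isPivot_pivot {σ : ℕ × ℕ → SLetter} (h : (violations μ (sAbs ∘ σ)).Nonempty) :
    IsPivot μ σ (pivot μ (sAbs ∘ σ)) := by
  obtain ⟨hmem, hmin⟩ := pivot_spec h
  set p := pivot μ (sAbs ∘ σ)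
  obtain ⟨hcell, hlt⟩ := mem_filter.mp hmem
  simp only [Function.comp_apply] at hlt
  have hkey : ∀ v ∈ cells μ, sAbs (σ v) < v.1 → sAbs (σ p) < sAbs (σ v) ∨
      sAbs (σ p) = sAbs (σ v) ∧ (v.1 < p.1 ∨ p.1 = v.1 ∧ p.2 ≤ v.2) :=
    fun v hv hviol => pivotKey_le_iff.mp (hmin v (mem_filter.mpr ⟨hv, hviol⟩))
  refine ⟨hcell, hlt, fun v hv hrow => ?_, fun v hv hread => ?_⟩
  · by_cases hviol : sAbs (σ v) < v.1
    · have := hkey v hv hviol; omega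
    · omega
  · unfold ReadBefore at hread
    by_cases hviol : sAbs (σ v) < v.1
    · have := hkey v hv hviol; omega
    · omega

end Pivot

section Involution

variable {μ : List ℕ} {N : ℕ}

def toggleBar (μ : List ℕ) (f : {u // u ∈ cells μ} → Fin N × Bool) (c : ℕ × ℕ) :
    {u // u ∈ cells μ} → Fin N × Bool :=
  fun v => if v.1 = c then ((f v).1, !(f v).2) else f v

lemma toggleBar_toggleBar (f : {u // u ∈ cells μ} → Fin N × Bool) (c : ℕ × ℕ) :
    toggleBar μ (toggleBar μ f c) c = f := by
  funext v
  by_cases hv : v.1 = c <;> simp [toggleBar, hv]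

lemma fst_toggleBar (f : {u // u ∈ cells μ} → Fin N × Bool) (c : ℕ × ℕ)
    (v : {u // u ∈ cells μ}) : (toggleBar μ f c v).1 = (f v).1 := by
  unfold toggleBar
  split_ifs <;> rfl

lemma sAbs_comp_superFill_toggleBar (f : {u // u ∈ cells μ} → Fin N × Bool) (c : ℕ × ℕ) :
    sAbs ∘ superFill μ (toggleBar μ f c) = sAbs ∘ superFill μ f := by
  funext v
  simp only [Function.comp_apply, sAbs, superFill, extendF]
  split_ifs <;> simp [fst_toggleBar]

lemma superFill_toggleBar (f : {u // u ∈ cells μ} → Fin N × Bool) {c : ℕ × ℕ}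
    (hc : c ∈ cells μ) :
    superFill μ (toggleBar μ f c) =
      Function.update (superFill μ f) c ((superFill μ f c).1, !(superFill μ f c).2) := by
  funext v
  by_cases hv : v = c
  · subst hv
    simp [superFill, extendF, toggleBar, hc]
  · rw [Function.update_of_ne hv]
    simp only [superFill, extendF]
    split_ifs with h
    · simp [toggleBar, hv]
    · rfl

noncomputable def barInvolution (μ : List ℕ) (f : {u // u ∈ cells μ} → Fin N × Bool) :
    {u // u ∈ cells μ} → Fin N × Bool :=
  toggleBar μ f (pivot μ (sAbs ∘ superFill μ f))

lemma barInvolution_barInvolution (f : {u // u ∈ cells μ} → Fin N × Bool) :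
    barInvolution μ (barInvolution μ f) = f := by
  rw [barInvolution, barInvolution, sAbs_comp_superFill_toggleBar, toggleBar_toggleBar]

lemma barInvolution_ne (f : {u // u ∈ cells μ} → Fin N × Bool)
    (h : (violations μ (sAbs ∘ superFill μ f)).Nonempty) : barInvolution μ f ≠ f := by
  intro heq
  have hc := (mem_filter.mp (pivot_spec h).1).1
  have := congrArg Prod.snd (congrFun heq ⟨_, hc⟩)
  simp [barInvolution, toggleBar] at this

end Involution

noncomputable def superWeight (μ : List ℕ) {N : ℕ} (f : {u // u ∈ cells μ} → Fin N × Bool) :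
    MvPolynomial (Fin N) (MvPolynomial (Fin 2) ℤ) :=
  (-1) ^ negCount μ (superFill μ f) *
    C ((X 0 : MvPolynomial (Fin 2) ℤ) ^ invStat μ (IndOf lt2) (superFill μ f) *
       (X 1 : MvPolynomial (Fin 2) ℤ) ^
          (posCount μ (superFill μ f) + majStat μ (IndOf lt2) (superFill μ f))) *
    ∏ u, X ((f u).1)

lemma superWeight_eq_neg_of_update_bar {μ : List ℕ} (hμ : IsPartitionList μ) {N : ℕ}
    {f f' : {u // u ∈ cells μ} → Fin N × Bool} {r j k : ℕ}
    (hp : IsPivot μ (superFill μ f) (r, j)) (hσ : superFill μ f (r, j) = (k, false))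
    (hf' : superFill μ f' = Function.update (superFill μ f) (r, j) (k, true))
    (hfst : ∀ u, (f' u).1 = (f u).1) :
    superWeight μ f' = - superWeight μ f := by
  have hpos := posCount_update_bar hp.mem hσ
  have hmaj := majStat_update_bar hμ hp hσ
  have hqt : posCount μ (superFill μ f') + majStat μ (IndOf lt2) (superFill μ f')
      = posCount μ (superFill μ f) + majStat μ (IndOf lt2) (superFill μ f) := by
    rw [hf']; omega
  rw [superWeight, superWeight, hqt, hf', negCount_update_bar hp.mem hσ,
    invStat_update_bar hμ hp hσ]
  simp only [hfst, pow_succ]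
  ring

lemma superWeight_barInvolution {μ : List ℕ} (hμ : IsPartitionList μ) {N : ℕ}
    (f : {u // u ∈ cells μ} → Fin N × Bool)
    (h : (violations μ (sAbs ∘ superFill μ f)).Nonempty) :
    superWeight μ (barInvolution μ f) = - superWeight μ f := by
  have hp := isPivot_pivot h
  rcases hpivot : pivot μ (sAbs ∘ superFill μ f) with ⟨r, j⟩
  rw [hpivot] at hp
  have hfill : superFill μ (barInvolution μ f) = Function.update (superFill μ f) (r, j)
      ((superFill μ f (r, j)).1, !(superFill μ f (r, j)).2) := by
    rw [barInvolution, hpivot, superFill_toggleBar f hp.mem]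
  have hfst (u : {u // u ∈ cells μ}) : (barInvolution μ f u).1 = (f u).1 := fst_toggleBar f _ u
  cases hbar : (superFill μ f (r, j)).2
  · rw [hbar] at hfill
    exact superWeight_eq_neg_of_update_bar hμ hp (Prod.ext rfl hbar) hfill hfst
  · rw [hbar] at hfill
    have hp' : IsPivot μ (superFill μ (barInvolution μ f)) (r, j) :=
      hp.of_sAbs_eq (congrFun (sAbs_comp_superFill_toggleBar f _))
    have hunbar : superFill μ (barInvolution μ f) (r, j) = ((superFill μ f (r, j)).1, false) := by
      simp [hfill]
    have hrebar : superFill μ f = Function.update (superFill μ (barInvolution μ f)) (r, j)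
        ((superFill μ f (r, j)).1, true) := by
      rw [hfill, Function.update_idem, ← hbar, Function.update_eq_self]
    rw [superWeight_eq_neg_of_update_bar hμ hp' hunbar hrebar (fun u => (hfst u).symm), neg_neg]

lemma sum_superWeight_violating {μ : List ℕ} (hμ : IsPartitionList μ) (N : ℕ) :
    ∑ f ∈ univ.filter (fun f : {u // u ∈ cells μ} → Fin N × Bool =>
      ¬ ∀ u ∈ cells μ, u.1 ≤ sAbs (superFill μ f u)), superWeight μ f = 0 := by
  refine sum_involution (fun f _ => barInvolution μ f) (fun f hf => ?_) (fun f hf _ => ?_)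
    (fun f hf => ?_) (fun f _ => barInvolution_barInvolution f) <;>
  have h : (violations μ (sAbs ∘ superFill μ f)).Nonempty :=
    violations_nonempty_iff.mpr (mem_filter.mp hf).2
  · rw [superWeight_barInvolution hμ f h, add_neg_cancel]
  · exact barInvolution_ne f h
  · refine mem_filter.mpr ⟨mem_univ _, fun hbound => (mem_filter.mp hf).2 fun u hu => ?_⟩
    exact (hbound u hu).trans_eq (congrFun (sAbs_comp_superFill_toggleBar f _) u)

theorem phi_cancellation_to_row_bounded_general (μ : List ℕ) (hμ : IsPartitionList μ)
    (N : ℕ) :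
    ∑ f : {u // u ∈ cells μ} → Fin N × Bool,
      ((-1 : MvPolynomial (Fin N) (MvPolynomial (Fin 2) ℤ)) ^ negCount μ (superFill μ f) *
        C ((X 0 : MvPolynomial (Fin 2) ℤ) ^ invStat μ (IndOf lt2) (superFill μ f) *
           (X 1 : MvPolynomial (Fin 2) ℤ) ^
              (posCount μ (superFill μ f) + majStat μ (IndOf lt2) (superFill μ f))) *
        ∏ u, X ((f u).1))
    = ∑ f ∈ Finset.univ.filter (fun f : {u // u ∈ cells μ} → Fin N × Bool =>
          ∀ u ∈ cells μ, u.1 ≤ sAbs (superFill μ f u)),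
        ((-1 : MvPolynomial (Fin N) (MvPolynomial (Fin 2) ℤ)) ^ negCount μ (superFill μ f) *
          C ((X 0 : MvPolynomial (Fin 2) ℤ) ^ invStat μ (IndOf lt2) (superFill μ f) *
             (X 1 : MvPolynomial (Fin 2) ℤ) ^
                (posCount μ (superFill μ f) + majStat μ (IndOf lt2) (superFill μ f))) *
          ∏ u, X ((f u).1)) := by
  change ∑ f, superWeight μ f = ∑ f ∈ _, superWeight μ f
  rw [← sum_filter_add_sum_filter_not univ (fun f => ∀ u ∈ cells μ, u.1 ≤ sAbs (superFill μ f u)),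
    sum_superWeight_violating hμ, add_zero]

/-- With the order `<₂` on the super alphabet,
`Σ_σ (−1)^{m(σ)} q^{inv(σ)} t^{p(σ)+maj(σ)} x^{|σ|}` over all super fillings
`σ : dg(μ) → A` with `|σ(u)| ≤ N` equals the same sum restricted to those `σ`
with `|σ(u)| ≥ i` for every cell `u = (i,j)`. -/
theorem phi_cancellation_to_row_bounded (μ : List ℕ) (hμ : IsPartitionList μ)
    (N : ℕ) (hN : 1 ≤ N) :
    ∑ f : {u // u ∈ cells μ} → Fin N × Bool,
      ((-1 : MvPolynomial (Fin N) (MvPolynomial (Fin 2) ℤ)) ^ negCount μ (superFill μ f) *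
        C ((X 0 : MvPolynomial (Fin 2) ℤ) ^ invStat μ (IndOf lt2) (superFill μ f) *
           (X 1 : MvPolynomial (Fin 2) ℤ) ^
              (posCount μ (superFill μ f) + majStat μ (IndOf lt2) (superFill μ f))) *
        ∏ u, X ((f u).1))
    = ∑ f ∈ Finset.univ.filter (fun f : {u // u ∈ cells μ} → Fin N × Bool =>
          ∀ u ∈ cells μ, u.1 ≤ sAbs (superFill μ f u)),
        ((-1 : MvPolynomial (Fin N) (MvPolynomial (Fin 2) ℤ)) ^ negCount μ (superFill μ f) *
          C ((X 0 : MvPolynomial (Fin 2) ℤ) ^ invStat μ (IndOf lt2) (superFill μ f) *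
             (X 1 : MvPolynomial (Fin 2) ℤ) ^
                (posCount μ (superFill μ f) + majStat μ (IndOf lt2) (superFill μ f))) *
          ∏ u, X ((f u).1)) :=
  phi_cancellation_to_row_bounded_general μ hμ N

end HHL
end

section
/- Let μ be a partition of n and 0 ≤ d ≤ n. Use the super alphabet restricted to {1, 1̄} with the order 1 < 1̄. Then Σ_σ q^{inv(σ)} t^{maj(σ)}, summed over all super fillings σ : dg(μ) → {1, 1̄} with exactly d entries equal to 1̄, equals the d-th elementary symmetric polynomial of the monomials {t^{i−1} q^{j−1} : (i,j) ∈ dg(μ)}, i.e. Σ_{S ⊆ dg(μ), |S| = d} ∏_{(i,j) ∈ S} t^{i−1} q^{j−1}. (Equivalently, the coefficient of (−u)^d in H̃_μ[1−u;q,t] is e_d[B_μ], where B_μ = Σ_{(i,j)∈μ} t^{i−1}q^{j−1}.) -/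
open Finset MvPolynomial

namespace HHL

/-!
With the alphabet `{1, 1̄}` and `1 < 1̄` we have `I(x, y) = 1` exactly when `x = 1̄`, so the
descents are the barred cells off the bottom row and every inversion starts at a barred cell.
Hence `q^inv t^maj` is a product over the barred cells: a barred cell `(1, j)` contributes
`q^arm`, and a barred cell `(i, j)` with `i ≥ 2` contributes `q^(j-1) t^(leg+1)`. The sum is
therefore `e_d` of these cell weights, and the involution of `dg(μ)` reversing the bottom row
and each column above it carries them to the monomials `t^(i-1) q^(j-1)`.
-/

lemma eq_range_card_of_isLowerSet {S : Finset ℕ} (hS : IsLowerSet (S : Set ℕ)) :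
    S = range #S := by
  obtain ⟨a, ha⟩ := hS.eq_univ_or_Iio.resolve_left fun h =>
    Set.infinite_univ (h ▸ S.finite_toSet)
  obtain rfl : S = range a := coe_injective (by rw [ha, coe_range])
  rw [card_range]

lemma sum_powersetCard_prod_comp_of_bijOn {α R : Type*} [DecidableEq α] [CommSemiring R]
    {s : Finset α} {φ : α → α} (hφ : Set.BijOn φ s s) (w : α → R) (d : ℕ) :
    ∑ S ∈ s.powersetCard d, ∏ u ∈ S, w (φ u) = ∑ S ∈ s.powersetCard d, ∏ u ∈ S, w u := by
  have himage : s.image φ = s := coe_injective (by rw [coe_image, hφ.image_eq])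
  rw [← esymm_map_val, ← esymm_map_val, ← Function.comp_def, ← Multiset.map_map,
    ← image_val_of_injOn hφ.injOn, himage]

section Cells

variable {μ : List ℕ} {u : ℕ × ℕ}

lemma getD_antitone (hμ : IsPartitionList μ) {a b : ℕ} (hab : a ≤ b) (hb : b < μ.length) :
    μ.getD b 0 ≤ μ.getD a 0 := by
  rcases hab.eq_or_lt with rfl | h
  · exact le_rfl
  · rw [List.getD_eq_getElem _ _ hb, List.getD_eq_getElem _ _ (h.trans hb)]
    exact List.pairwise_iff_getElem.mp hμ.1 a b _ hb h

lemma mem_cells :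
    u ∈ cells μ ↔ 1 ≤ u.1 ∧ u.1 ≤ μ.length ∧ 1 ≤ u.2 ∧ u.2 ≤ μ.getD (u.1 - 1) 0 := by
  simp only [cells, mem_filter, mem_product, mem_Icc]
  refine ⟨fun ⟨⟨⟨h1, h2⟩, h3, _⟩, h4⟩ => ⟨h1, h2, h3, h4⟩, fun ⟨h1, h2, h3, h4⟩ => ?_⟩
  have hrow : μ.getD (u.1 - 1) 0 ∈ μ := by
    rw [List.getD_eq_getElem _ _ (by omega)]
    exact List.getElem_mem _
  exact ⟨⟨⟨h1, h2⟩, h3, h4.trans (List.le_max_of_le' 0 hrow le_rfl)⟩, h4⟩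

lemma mem_cells_iff_le_conj (hμ : IsPartitionList μ) {i j : ℕ} (hj : 1 ≤ j) :
    (i, j) ∈ cells μ ↔ 1 ≤ i ∧ i ≤ conj μ j := by
  set S := (range μ.length).filter fun r => j ≤ μ.getD r 0
  have hlower : IsLowerSet (S : Set ℕ) := by
    intro a b hba ha
    simp only [S, coe_filter, mem_range, Set.mem_ofPred_eq] at ha ⊢
    exact ⟨by omega, ha.2.trans (getD_antitone hμ hba ha.1)⟩
  have hS : i - 1 ∈ S ↔ i - 1 < conj μ j := by
    rw [eq_range_card_of_isLowerSet hlower, mem_range]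
    rfl
  simp only [S, mem_filter, mem_range] at hS
  rw [mem_cells]
  constructor
  · rintro ⟨h1, h2, -, h4⟩
    have := hS.mp ⟨by omega, h4⟩
    omega
  · rintro ⟨h1, h2⟩
    have := hS.mpr (by omega)
    exact ⟨h1, by omega, hj, this.2⟩

lemma arm_eq (hu : u ∈ cells μ) : arm μ u = μ.getD (u.1 - 1) 0 - u.2 := by
  have hrow : (cells μ).filter (fun v => v.1 = u.1 ∧ u.2 < v.2)
      = (Ioc u.2 (μ.getD (u.1 - 1) 0)).map ⟨(u.1, ·), Prod.mk_right_injective u.1⟩ := by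
    ext ⟨i, j⟩
    have := mem_cells.mp hu
    simp only [mem_filter, mem_map, mem_Ioc, mem_cells, Function.Embedding.coeFn_mk,
      Prod.mk.injEq]
    constructor
    · rintro ⟨⟨-, -, -, hj⟩, rfl, hlt⟩
      exact ⟨j, ⟨hlt, hj⟩, rfl, rfl⟩
    · rintro ⟨k, ⟨hlt, hk⟩, rfl, rfl⟩
      exact ⟨⟨this.1, this.2.1, by omega, hk⟩, rfl, hlt⟩
  rw [arm, hrow, card_map, Nat.card_Ioc]

lemma leg_eq (hμ : IsPartitionList μ) (hu : u ∈ cells μ) : leg μ u = conj μ u.2 - u.1 := by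
  have hj := (mem_cells.mp hu).2.2.1
  have hcol : (cells μ).filter (fun v => v.2 = u.2 ∧ u.1 < v.1)
      = (Ioc u.1 (conj μ u.2)).map ⟨(·, u.2), Prod.mk_left_injective u.2⟩ := by
    ext ⟨i, j⟩
    simp only [mem_filter, mem_map, mem_Ioc, Function.Embedding.coeFn_mk, Prod.mk.injEq]
    constructor
    · rintro ⟨hij, rfl, hlt⟩
      exact ⟨i, ⟨hlt, ((mem_cells_iff_le_conj hμ hj).mp hij).2⟩, rfl, rfl⟩
    · rintro ⟨k, ⟨hlt, hk⟩, rfl, rfl⟩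
      exact ⟨(mem_cells_iff_le_conj hμ hj).mpr ⟨by omega, hk⟩, rfl, hlt⟩
  rw [leg, hcol, card_map, Nat.card_Ioc]

lemma card_attacked_below (hμ : IsPartitionList μ) (hu : u ∈ cells μ) :
    #{v ∈ cells μ | u.1 = v.1 + 1 ∧ v.2 < u.2} = if 2 ≤ u.1 then u.2 - 1 else 0 := by
  obtain ⟨h1, h2, h3, h4⟩ := mem_cells.mp hu
  split_ifs with hrow
  · have hbelow : (cells μ).filter (fun v => u.1 = v.1 + 1 ∧ v.2 < u.2)
        = (Ico 1 u.2).map ⟨(u.1 - 1, ·), Prod.mk_right_injective _⟩ := by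
      ext ⟨i, j⟩
      simp only [mem_filter, mem_map, mem_Ico, mem_cells, Function.Embedding.coeFn_mk,
        Prod.mk.injEq]
      have hmono := getD_antitone hμ (a := u.1 - 1 - 1) (b := u.1 - 1) (by omega) (by omega)
      constructor
      · rintro ⟨⟨-, -, hj, -⟩, hi, hlt⟩
        exact ⟨j, ⟨hj, hlt⟩, by omega, rfl⟩
      · rintro ⟨k, ⟨hk, hlt⟩, rfl, rfl⟩
        exact ⟨⟨by omega, by omega, hk, by omega⟩, by omega, hlt⟩
    rw [hbelow, card_map, Nat.card_Ico]
  · rw [card_eq_zero, filter_eq_empty_iff]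
    intro v hv
    have := (mem_cells.mp hv).1
    omega

lemma card_attackOrd (hμ : IsPartitionList μ) (hu : u ∈ cells μ) :
    #{v ∈ cells μ | AttackOrd u v} = arm μ u + if 2 ≤ u.1 then u.2 - 1 else 0 := by
  have hsplit : (cells μ).filter (AttackOrd u)
      = (cells μ).filter (fun v => v.1 = u.1 ∧ u.2 < v.2)
        ∪ (cells μ).filter (fun v => u.1 = v.1 + 1 ∧ v.2 < u.2) := by
    rw [← filter_or]
    exact filter_congr fun v _ => by unfold AttackOrd; omega
  rw [hsplit, card_union_of_disjoint, ← arm, card_attacked_below hμ hu]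
  exact disjoint_filter.mpr fun v _ h h' => by omega

end Cells

lemma indOf_lt1_iff_of_fst_eq {x y : SLetter} (h : x.1 = y.1) : IndOf lt1 x y ↔ x.2 = true := by
  obtain ⟨a, b⟩ := x
  obtain ⟨c, e⟩ := y
  obtain rfl : a = c := h
  cases b <;> cases e <;> simp [IndOf, lt1]

/-- A barred cell attacks its arm and, off the bottom row, the `j - 1` cells below and left
of it; off the bottom row the descent correction cancels the arm. -/
def barredInv (μ : List ℕ) (u : ℕ × ℕ) : ℕ := if 2 ≤ u.1 then u.2 - 1 else arm μ u

def barredMaj (μ : List ℕ) (u : ℕ × ℕ) : ℕ := if 2 ≤ u.1 then leg μ u + 1 else 0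

section BoolFillings

variable {μ : List ℕ} (f : {u // u ∈ cells μ} → Bool)

def barredCells : Finset (ℕ × ℕ) := (cells μ).filter fun u => (boolFill μ f u).2 = true

lemma boolFill_fst (u : ℕ × ℕ) : (boolFill μ f u).1 = 0 := by
  unfold boolFill extendF
  split <;> rfl

lemma indOf_lt1_boolFill_iff (u v : ℕ × ℕ) :
    IndOf lt1 (boolFill μ f u) (boolFill μ f v) ↔ (boolFill μ f u).2 = true :=
  indOf_lt1_iff_of_fst_eq (by rw [boolFill_fst, boolFill_fst])

lemma mem_barredCells (u : {u // u ∈ cells μ}) : u.1 ∈ barredCells f ↔ f u = true := by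
  simp [barredCells, boolFill, extendF, u.2]

lemma barredCells_indicator {S : Finset (ℕ × ℕ)} (hS : S ⊆ cells μ) :
    barredCells (fun u : {u // u ∈ cells μ} => decide (u.1 ∈ S)) = S := by
  ext u
  simp only [barredCells, boolFill, extendF, mem_filter]
  constructor
  · rintro ⟨hu, h⟩
    simpa [hu] using h
  · intro hu
    simpa [hS hu] using hu

lemma sum_filter_negCount_eq_sum_powersetCard {R : Type*} [AddCommMonoid R]
    (g : Finset (ℕ × ℕ) → R) (d : ℕ) :
    ∑ f ∈ univ.filter (fun f : {u // u ∈ cells μ} → Bool => negCount μ (boolFill μ f) = d),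
      g (barredCells f) = ∑ S ∈ (cells μ).powersetCard d, g S := by
  refine sum_nbij' barredCells (fun S u => decide (u.1 ∈ S)) ?_ ?_ ?_ ?_ (fun _ _ => rfl)
  · intro f hf
    exact mem_powersetCard.mpr ⟨filter_subset _ _, (mem_filter.mp hf).2⟩
  · intro S hS
    obtain ⟨hsub, hcard⟩ := mem_powersetCard.mp hS
    refine mem_filter.mpr ⟨mem_univ _, ?_⟩
    change #(barredCells _) = d
    rw [barredCells_indicator hsub, hcard]
  · intro f _
    funext u
    simp [mem_barredCells]
  · intro S hS
    exact barredCells_indicator (mem_powersetCard.mp hS).1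

lemma card_invPairs_boolFill :
    #(invPairs μ (IndOf lt1) (boolFill μ f))
      = ∑ u ∈ barredCells f, #{v ∈ cells μ | AttackOrd u v} := by
  rw [invPairs, card_filter, sum_product, barredCells, sum_filter]
  refine sum_congr rfl fun u _ => ?_
  simp only [indOf_lt1_boolFill_iff]
  split_ifs with hb <;> simp [hb]

lemma desCells_boolFill (hμ : IsPartitionList μ) :
    desCells μ (IndOf lt1) (boolFill μ f) = (barredCells f).filter (2 ≤ ·.1) := by
  unfold desCells barredCells
  rw [filter_filter]
  refine filter_congr fun u hu => ?_
  obtain ⟨h1, h2, h3, h4⟩ := mem_cells.mp hu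
  rw [indOf_lt1_boolFill_iff, mem_cells]
  dsimp only
  have := getD_antitone hμ (a := u.1 - 1 - 1) (b := u.1 - 1) (by omega) (by omega)
  constructor
  · rintro ⟨⟨hbelow, -⟩, hb⟩
    exact ⟨hb, by omega⟩
  · rintro ⟨hb, hrow⟩
    exact ⟨⟨by omega, by omega, h3, by omega⟩, hb⟩

lemma majStat_boolFill (hμ : IsPartitionList μ) :
    majStat μ (IndOf lt1) (boolFill μ f) = ∑ u ∈ barredCells f, barredMaj μ u := by
  rw [majStat, desCells_boolFill f hμ, sum_filter]
  rfl

lemma invStat_boolFill (hμ : IsPartitionList μ) :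
    invStat μ (IndOf lt1) (boolFill μ f) = ∑ u ∈ barredCells f, barredInv μ u := by
  have hsplit : ∑ u ∈ barredCells f, #{v ∈ cells μ | AttackOrd u v}
      = ∑ u ∈ barredCells f, barredInv μ u
        + ∑ u ∈ (barredCells f).filter (2 ≤ ·.1), arm μ u := by
    rw [sum_filter, ← sum_add_distrib]
    refine sum_congr rfl fun u hu => ?_
    rw [card_attackOrd hμ (filter_subset _ _ hu), barredInv]
    split_ifs <;> omega
  rw [invStat, card_invPairs_boolFill, desCells_boolFill f hμ, hsplit, Nat.add_sub_cancel]

end BoolFillings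

def flipCell (μ : List ℕ) (u : ℕ × ℕ) : ℕ × ℕ :=
  if u.1 = 1 then (1, μ.getD 0 0 + 1 - u.2) else (conj μ u.2 + 2 - u.1, u.2)

section FlipCell

variable {μ : List ℕ} {u : ℕ × ℕ}

lemma flipCell_mem (hμ : IsPartitionList μ) (hu : u ∈ cells μ) : flipCell μ u ∈ cells μ := by
  obtain ⟨h1, h2, h3, h4⟩ := mem_cells.mp hu
  unfold flipCell
  split_ifs with hrow
  · rw [hrow, Nat.sub_self] at h4
    exact mem_cells.mpr ⟨le_rfl, by omega, by omega, by simp only [Nat.sub_self]; omega⟩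
  · have := ((mem_cells_iff_le_conj hμ h3).mp hu).2
    exact (mem_cells_iff_le_conj hμ h3).mpr ⟨by omega, by omega⟩

lemma flipCell_flipCell (hμ : IsPartitionList μ) (hu : u ∈ cells μ) :
    flipCell μ (flipCell μ u) = u := by
  obtain ⟨i, j⟩ := u
  obtain ⟨h1, h2, h3, h4⟩ := mem_cells.mp hu
  have hi := ((mem_cells_iff_le_conj hμ h3).mp hu).2
  dsimp only at h1 h3 h4 hi
  by_cases hrow : i = 1
  · subst hrow
    simp only [flipCell, if_true, Prod.mk.injEq, true_and]
    simp only [Nat.sub_self] at h4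
    omega
  · have : conj μ j + 2 - i ≠ 1 := by omega
    simp only [flipCell, hrow, this, if_false, Prod.mk.injEq, and_true]
    omega

lemma flipCell_fst_sub_one (hμ : IsPartitionList μ) (hu : u ∈ cells μ) :
    (flipCell μ u).1 - 1 = barredMaj μ u := by
  have h1 := (mem_cells.mp hu).1
  have hi := ((mem_cells_iff_le_conj hμ (mem_cells.mp hu).2.2.1).mp hu).2
  unfold flipCell barredMaj
  split_ifs <;> first | omega | (rw [leg_eq hμ hu]; omega)

lemma flipCell_snd_sub_one (hu : u ∈ cells μ) : (flipCell μ u).2 - 1 = barredInv μ u := by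
  obtain ⟨h1, -, h3, h4⟩ := mem_cells.mp hu
  unfold flipCell barredInv
  split_ifs with hrow <;> try omega
  rw [arm_eq hu, hrow, Nat.sub_self]
  rw [hrow, Nat.sub_self] at h4
  dsimp only
  omega

end FlipCell

lemma bijOn_flipCell {μ : List ℕ} (hμ : IsPartitionList μ) :
    Set.BijOn (flipCell μ) (cells μ) (cells μ) :=
  have hmaps : Set.MapsTo (flipCell μ) (cells μ) (cells μ) := fun _ hu => flipCell_mem hμ hu
  Set.InvOn.bijOn ⟨fun _ hu => flipCell_flipCell hμ hu, fun _ hu => flipCell_flipCell hμ hu⟩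
    hmaps hmaps

theorem hook_coefficient_specialization_general (μ : List ℕ)
    (hμ : IsPartitionList μ) (d : ℕ) :
    ∑ f ∈ Finset.univ.filter (fun f : {u // u ∈ cells μ} → Bool =>
        negCount μ (boolFill μ f) = d),
      ((X 0 : MvPolynomial (Fin 2) ℤ) ^ invStat μ (IndOf lt1) (boolFill μ f) *
       (X 1 : MvPolynomial (Fin 2) ℤ) ^ majStat μ (IndOf lt1) (boolFill μ f))
    = ∑ S ∈ (cells μ).powersetCard d,
        ∏ u ∈ S,
          (X 1 : MvPolynomial (Fin 2) ℤ) ^ (u.1 - 1) *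
            (X 0 : MvPolynomial (Fin 2) ℤ) ^ (u.2 - 1) := by
  set w : ℕ × ℕ → MvPolynomial (Fin 2) ℤ := fun u => X 1 ^ (u.1 - 1) * X 0 ^ (u.2 - 1)
  calc _ = ∑ f ∈ Finset.univ.filter (fun f : {u // u ∈ cells μ} → Bool =>
          negCount μ (boolFill μ f) = d),
          ∏ u ∈ barredCells f, w (flipCell μ u) := by
        refine sum_congr rfl fun f _ => ?_
        rw [invStat_boolFill f hμ, majStat_boolFill f hμ, ← prod_pow_eq_pow_sum,
          ← prod_pow_eq_pow_sum, ← prod_mul_distrib]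
        refine prod_congr rfl fun u hu => ?_
        have hu := filter_subset _ _ hu
        rw [mul_comm, ← flipCell_fst_sub_one hμ hu, ← flipCell_snd_sub_one hu]
    _ = ∑ S ∈ (cells μ).powersetCard d, ∏ u ∈ S, w (flipCell μ u) :=
        sum_filter_negCount_eq_sum_powersetCard (fun S => ∏ u ∈ S, w (flipCell μ u)) d
    _ = _ := sum_powersetCard_prod_comp_of_bijOn (bijOn_flipCell hμ) w d

/-- Let `μ` be a partition of `n`, `0 ≤ d ≤ n`, and use the
alphabet `{1, 1̄}` with `1 < 1̄`.  Then `Σ_σ q^{inv(σ)} t^{maj(σ)}` over super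
fillings `σ : dg(μ) → {1, 1̄}` with exactly `d` entries `1̄` equals the `d`-th
elementary symmetric polynomial of the monomials `t^{i−1} q^{j−1}`,
`(i,j) ∈ dg(μ)`.  (Equivalently: the coefficient of `(−u)^d` in
`H̃_μ[1−u;q,t]` is `e_d[B_μ]`.) -/
theorem hook_coefficient_specialization (n : ℕ) (μ : List ℕ)
    (hμ : IsPartitionList μ) (hn : μ.sum = n) (d : ℕ) (hd : d ≤ n) :
    ∑ f ∈ Finset.univ.filter (fun f : {u // u ∈ cells μ} → Bool =>
        negCount μ (boolFill μ f) = d),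
      ((X 0 : MvPolynomial (Fin 2) ℤ) ^ invStat μ (IndOf lt1) (boolFill μ f) *
       (X 1 : MvPolynomial (Fin 2) ℤ) ^ majStat μ (IndOf lt1) (boolFill μ f))
    = ∑ S ∈ (cells μ).powersetCard d,
        ∏ u ∈ S,
          (X 1 : MvPolynomial (Fin 2) ℤ) ^ (u.1 - 1) *
            (X 0 : MvPolynomial (Fin 2) ℤ) ^ (u.2 - 1) :=
  hook_coefficient_specialization_general μ hμ d

end HHL
end
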